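/- Let M = {x¹>0, x²>0} ⊆ ℝ⁴ with ω = x¹dx²∧dx³ + x²dx¹∧dx⁴, and let M̃ = M × ℝ^{2n-4} (n ≥ 3) with ω̃ = ω + e^{x³x⁴} Σ_{h=1}^{n-2} dy^h∧dy^{n-2+h}. Then the only vector field X on M̃ with i(X)dω̃ = 0 is X = 0; in particular (M̃, ω̃) has no nonzero locally Hamiltonian vector fields and no non-constant Hamiltonian functions. -/

import Mathlib

noncomputable section

open scoped BigOperators

/-- Partial derivative of `g` at `z` in the `i`-th coordinate direction. -/
def pder {ι : Type*} [Fintype ι] [DecidableEq ι] (i : ι)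
    (g : (ι → ℝ) → ℝ) (z : ι → ℝ) : ℝ :=
  fderiv ℝ g z (Pi.single i 1)

/-- Components of the exterior differential of a 1-form with components `α`. -/
def dOne {ι : Type*} [Fintype ι] [DecidableEq ι]
    (α : (ι → ℝ) → ι → ℝ) (z : ι → ℝ) (i j : ι) : ℝ :=
  pder i (fun w => α w j) z - pder j (fun w => α w i) z

/-- Components of the exterior differential of a 2-form with (skew-symmetric)
components `ω`: `(dω)_{ijk} = ∂_i ω_{jk} - ∂_j ω_{ik} + ∂_k ω_{ij}`. -/
def dTwo {ι : Type*} [Fintype ι] [DecidableEq ι]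
    (ω : (ι → ℝ) → ι → ι → ℝ) (z : ι → ℝ) (i j k : ι) : ℝ :=
  pder i (fun w => ω w j k) z - pder j (fun w => ω w i k) z + pder k (fun w => ω w i j) z

/-- Components of the interior product `i(X)ω` of a vector field with a 2-form. -/
def intTwo {ι : Type*} [Fintype ι]
    (X : (ι → ℝ) → ι → ℝ) (ω : (ι → ℝ) → ι → ι → ℝ) (z : ι → ℝ) (j : ι) : ℝ :=
  ∑ i, X z i * ω z i j

/-- Components of the interior product `i(X)Θ` of a vector field with a 3-form. -/
def intThree {ι : Type*} [Fintype ι]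
    (X : (ι → ℝ) → ι → ℝ) (Θ : (ι → ℝ) → ι → ι → ι → ℝ) (z : ι → ℝ) (j k : ι) : ℝ :=
  ∑ i, X z i * Θ z i j k

/-!
Statement 9: Let `M = {x¹>0, x²>0} ⊆ ℝ⁴` with `ω = x¹dx²∧dx³ + x²dx¹∧dx⁴`, and
`M̃ = M × ℝ^{2n-4}` (`n ≥ 3`) with
`ω̃ = ω + e^{x³x⁴} ∑_{h=1}^{n-2} dy^h ∧ dy^{n-2+h}`.
Then the only vector field `X` on `M̃` with `i(X)dω̃ = 0` is `X = 0`; in particular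
there are no nonzero locally Hamiltonian vector fields and no non-constant Hamiltonian
functions.

We index the coordinates by `Fin 4 ⊕ (Fin (n-2) ⊕ Fin (n-2))`: `Sum.inl` are the
coordinates `x¹,…,x⁴` (0-indexed) and the `y`-coordinates are split so that `y^h`
(`h ≤ n-2`) corresponds to `Sum.inr (Sum.inl h)` and `y^{n-2+h}` to `Sum.inr (Sum.inr h)`.
-/

/-- Index type of coordinates of `M̃ = M × ℝ^{2n-4}`. -/
abbrev Idx (n : ℕ) : Type := Fin 4 ⊕ (Fin (n - 2) ⊕ Fin (n - 2))

/-- The open set `M̃ = {x¹ > 0, x² > 0}`. -/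
def Mtil (n : ℕ) : Set (Idx n → ℝ) :=
  {z | 0 < z (Sum.inl 0) ∧ 0 < z (Sum.inl 1)}

/-- Components of `ω̃ = x¹dx²∧dx³ + x²dx¹∧dx⁴ + e^{x³x⁴} ∑ dy^h∧dy^{n-2+h}`. -/
def omt (n : ℕ) (z : Idx n → ℝ) (a b : Idx n) : ℝ :=
  match a, b with
  | .inl i, .inl j =>
      if i = 1 ∧ j = 2 then z (.inl 0) else if i = 2 ∧ j = 1 then -z (.inl 0)
      else if i = 0 ∧ j = 3 then z (.inl 1) else if i = 3 ∧ j = 0 then -z (.inl 1) else 0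
  | .inr (.inl h), .inr (.inr k) =>
      if h = k then Real.exp (z (.inl 2) * z (.inl 3)) else 0
  | .inr (.inr h), .inr (.inl k) =>
      if h = k then -Real.exp (z (.inl 2) * z (.inl 3)) else 0
  | _, _ => 0

/-! ### Auxiliary material -/

/-- coefficient of `x¹` in `ω̃_{ab}` -/
def cA {n : ℕ} (a b : Idx n) : ℝ :=
  match a, b with
  | .inl i, .inl j => if i = 1 ∧ j = 2 then 1 else if i = 2 ∧ j = 1 then -1 else 0
  | _, _ => 0

/-- coefficient of `x²` in `ω̃_{ab}` -/
def cB {n : ℕ} (a b : Idx n) : ℝ :=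
  match a, b with
  | .inl i, .inl j => if i = 0 ∧ j = 3 then 1 else if i = 3 ∧ j = 0 then -1 else 0
  | _, _ => 0

/-- coefficient of `e^{x³x⁴}` in `ω̃_{ab}` -/
def cC {n : ℕ} (a b : Idx n) : ℝ :=
  match a, b with
  | .inr (.inl h), .inr (.inr k) => if h = k then 1 else 0
  | .inr (.inr h), .inr (.inl k) => if h = k then -1 else 0
  | _, _ => 0

lemma omt_eq (n : ℕ) (w : Idx n → ℝ) (a b : Idx n) :
    omt n w a b = cA a b * w (Sum.inl 0) + cB a b * w (Sum.inl 1)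
      + cC a b * Real.exp (w (Sum.inl 2) * w (Sum.inl 3)) := by
  rcases a with i | (h | h) <;> rcases b with j | (k | k) <;>
    simp only [omt, cA, cB, cC] <;> (try split_ifs) <;> (try simp_all)
  all_goals ring

/-- The value of `∂_i ω̃_{ab}` at `z`. -/
def DD (n : ℕ) (z : Idx n → ℝ) (a b i : Idx n) : ℝ :=
  cA a b * (if (Sum.inl 0 : Idx n) = i then 1 else 0)
  + cB a b * (if (Sum.inl 1 : Idx n) = i then 1 else 0)
  + cC a b * (((if (Sum.inl 2 : Idx n) = i then 1 else 0) * z (Sum.inl 3)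
      + z (Sum.inl 2) * (if (Sum.inl 3 : Idx n) = i then 1 else 0))
      * Real.exp (z (Sum.inl 2) * z (Sum.inl 3)))

lemma pder_omt (n : ℕ) (z : Idx n → ℝ) (a b i : Idx n) :
    pder i (fun w => omt n w a b) z = DD n z a b i := by
  have hfun : (fun w => omt n w a b)
      = fun w : Idx n → ℝ => cA a b * w (Sum.inl 0) + cB a b * w (Sum.inl 1)
        + cC a b * Real.exp (w (Sum.inl 2) * w (Sum.inl 3)) :=
    funext fun w => omt_eq n w a b
  rw [hfun]
  have h0 := hasFDerivAt_apply (𝕜 := ℝ) (Sum.inl 0 : Idx n) z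
  have h1 := hasFDerivAt_apply (𝕜 := ℝ) (Sum.inl 1 : Idx n) z
  have h2 := hasFDerivAt_apply (𝕜 := ℝ) (Sum.inl 2 : Idx n) z
  have h3 := hasFDerivAt_apply (𝕜 := ℝ) (Sum.inl 3 : Idx n) z
  have hexp := (h2.mul h3).exp
  have H := ((h0.const_mul (cA a b)).add (h1.const_mul (cB a b))).add (hexp.const_mul (cC a b))
  rw [pder]
  erw [H.fderiv]
  simp only [DD, Pi.mul_apply, ContinuousLinearMap.add_apply, ContinuousLinearMap.coe_smul',
    Pi.smul_apply, ContinuousLinearMap.proj_apply, Pi.single_apply, smul_eq_mul]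
  split_ifs <;> ring

lemma dTwo_omt (n : ℕ) (z : Idx n → ℝ) (i j k : Idx n) :
    dTwo (omt n) z i j k = DD n z j k i - DD n z i k j + DD n z i j k := by
  rw [dTwo, pder_omt, pder_omt, pder_omt]

/-! ### The six component equations extracted from `i(X)dω̃ = 0` -/

section Equations
variable {n : ℕ} (X : (Idx n → ℝ) → Idx n → ℝ) (z : Idx n → ℝ)

lemma eqX0 (h : intThree X (dTwo (omt n)) z (Sum.inl 1) (Sum.inl 2) = 0) :
    X z (Sum.inl 0) = 0 := by
  have key : ∀ i : Idx n, dTwo (omt n) z i (Sum.inl 1) (Sum.inl 2)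
      = if i = Sum.inl 0 then 1 else 0 := by
    intro i
    rw [dTwo_omt]
    rcases i with i | (k | k)
    · fin_cases i <;> simp [DD, cA, cB, cC]
    · simp [DD, cA, cB, cC]
    · simp [DD, cA, cB, cC]
  rw [intThree] at h
  simp only [key, mul_ite, mul_one, mul_zero] at h
  rwa [Fintype.sum_ite_eq'] at h

lemma eqX1 (h : intThree X (dTwo (omt n)) z (Sum.inl 0) (Sum.inl 3) = 0) :
    X z (Sum.inl 1) = 0 := by
  have key : ∀ i : Idx n, dTwo (omt n) z i (Sum.inl 0) (Sum.inl 3)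
      = if i = Sum.inl 1 then 1 else 0 := by
    intro i
    rw [dTwo_omt]
    rcases i with i | (k | k)
    · fin_cases i <;> simp [DD, cA, cB, cC]
    · simp [DD, cA, cB, cC]
    · simp [DD, cA, cB, cC]
  rw [intThree] at h
  simp only [key, mul_ite, mul_one, mul_zero] at h
  rwa [Fintype.sum_ite_eq'] at h

lemma eqX23 (h : intThree X (dTwo (omt n)) z (Sum.inl 0) (Sum.inl 1) = 0) :
    X z (Sum.inl 2) = X z (Sum.inl 3) := by
  have key : ∀ i : Idx n, dTwo (omt n) z i (Sum.inl 0) (Sum.inl 1)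
      = (if i = Sum.inl 2 then 1 else 0) - (if i = Sum.inl 3 then 1 else 0) := by
    intro i
    rw [dTwo_omt]
    rcases i with i | (k | k)
    · fin_cases i <;> simp [DD, cA, cB, cC]
    · simp [DD, cA, cB, cC]
    · simp [DD, cA, cB, cC]
  rw [intThree] at h
  simp only [key, mul_sub, mul_ite, mul_one, mul_zero] at h
  rw [Finset.sum_sub_distrib, Fintype.sum_ite_eq', Fintype.sum_ite_eq'] at h
  linarith

lemma eqE4 (h0 : Fin (n - 2))
    (h : intThree X (dTwo (omt n)) z (Sum.inr (Sum.inl h0)) (Sum.inr (Sum.inr h0)) = 0) :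
    z (Sum.inl 3) * X z (Sum.inl 2) + z (Sum.inl 2) * X z (Sum.inl 3) = 0 := by
  set E := Real.exp (z (Sum.inl 2) * z (Sum.inl 3)) with hE
  have key : ∀ i : Idx n, dTwo (omt n) z i (Sum.inr (Sum.inl h0)) (Sum.inr (Sum.inr h0))
      = (if i = Sum.inl 2 then z (Sum.inl 3) * E else 0)
        + (if i = Sum.inl 3 then z (Sum.inl 2) * E else 0) := by
    intro i
    rw [dTwo_omt]
    rcases i with i | (k | k)
    · fin_cases i <;> simp [DD, cA, cB, cC, hE] <;> ring
    · simp [DD, cA, cB, cC] <;> split_ifs <;> ring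
    · simp [DD, cA, cB, cC] <;> split_ifs <;> ring
  rw [intThree] at h
  simp only [key, mul_add, mul_ite, mul_zero] at h
  rw [Finset.sum_add_distrib, Fintype.sum_ite_eq', Fintype.sum_ite_eq'] at h
  have hEne : E ≠ 0 := (Real.exp_pos _).ne'
  have h2 : (z (Sum.inl 3) * X z (Sum.inl 2) + z (Sum.inl 2) * X z (Sum.inl 3)) * E = 0 := by
    linear_combination h
  exact (mul_eq_zero.mp h2).resolve_right hEne

lemma eqY2 (k0 : Fin (n - 2))
    (h : intThree X (dTwo (omt n)) z (Sum.inl 2) (Sum.inr (Sum.inl k0)) = 0) :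
    z (Sum.inl 3) * X z (Sum.inr (Sum.inr k0)) = 0 := by
  set E := Real.exp (z (Sum.inl 2) * z (Sum.inl 3)) with hE
  have key : ∀ i : Idx n, dTwo (omt n) z i (Sum.inl 2) (Sum.inr (Sum.inl k0))
      = if i = Sum.inr (Sum.inr k0) then z (Sum.inl 3) * E else 0 := by
    intro i
    rw [dTwo_omt]
    rcases i with i | (k | k)
    · fin_cases i <;> simp [DD, cA, cB, cC, hE] <;> ring
    · simp [DD, cA, cB, cC] <;> split_ifs <;> ring
    · simp [DD, cA, cB, cC, hE] <;> split_ifs <;> simp_all <;> ring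
  rw [intThree] at h
  simp only [key, mul_ite, mul_zero] at h
  rw [Fintype.sum_ite_eq'] at h
  have hEne : E ≠ 0 := (Real.exp_pos _).ne'
  have h2 : (z (Sum.inl 3) * X z (Sum.inr (Sum.inr k0))) * E = 0 := by linear_combination h
  exact (mul_eq_zero.mp h2).resolve_right hEne

lemma eqY1 (k0 : Fin (n - 2))
    (h : intThree X (dTwo (omt n)) z (Sum.inl 2) (Sum.inr (Sum.inr k0)) = 0) :
    z (Sum.inl 3) * X z (Sum.inr (Sum.inl k0)) = 0 := by
  set E := Real.exp (z (Sum.inl 2) * z (Sum.inl 3)) with hE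
  have key : ∀ i : Idx n, dTwo (omt n) z i (Sum.inl 2) (Sum.inr (Sum.inr k0))
      = if i = Sum.inr (Sum.inl k0) then -(z (Sum.inl 3) * E) else 0 := by
    intro i
    rw [dTwo_omt]
    rcases i with i | (k | k)
    · fin_cases i <;> simp [DD, cA, cB, cC, hE] <;> ring
    · simp [DD, cA, cB, cC, hE] <;> split_ifs <;> simp_all <;> ring
    · simp [DD, cA, cB, cC] <;> split_ifs <;> ring
  rw [intThree] at h
  simp only [key, mul_ite, mul_zero] at h
  rw [Fintype.sum_ite_eq'] at h
  have hEne : E ≠ 0 := (Real.exp_pos _).ne'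
  have h2 : (z (Sum.inl 3) * X z (Sum.inr (Sum.inl k0))) * E = 0 := by linear_combination -h
  exact (mul_eq_zero.mp h2).resolve_right hEne

end Equations

/-! ### Topological helpers -/

lemma dense_aux {g : ℝ → ℝ} (hg : Continuous g) (u : ℝ) (h : ∀ t, t ≠ u → g t = 0) (t : ℝ) :
    g t = 0 := by
  have hd : Dense ({u}ᶜ : Set ℝ) := dense_compl_singleton u
  have := hg.ext_on hd continuous_const (fun x hx => h x hx)
  exact congrFun this t

lemma cont_update {n : ℕ} (z : Idx n → ℝ) (i : Idx n) :
    Continuous fun t : ℝ => Function.update z i t := by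
  apply continuous_pi
  intro j
  by_cases h : j = i
  · subst h; simpa [Function.update_apply] using continuous_id'
  · simpa [Function.update_apply, h] using continuous_const

lemma isOpen_Mtil (n : ℕ) : IsOpen (Mtil n) := by
  have : Mtil n = {z : Idx n → ℝ | 0 < z (Sum.inl 0)} ∩ {z | 0 < z (Sum.inl 1)} := rfl
  rw [this]
  exact (isOpen_lt continuous_const (continuous_apply _)).inter
    (isOpen_lt continuous_const (continuous_apply _))

lemma convex_Mtil (n : ℕ) : Convex ℝ (Mtil n) := by
  have : Mtil n = {z : Idx n → ℝ | 0 < z (Sum.inl 0)} ∩ {z | 0 < z (Sum.inl 1)} := rfl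
  rw [this]
  exact (convex_halfSpace_gt ⟨fun _ _ => rfl, fun _ _ => rfl⟩ 0).inter
    (convex_halfSpace_gt ⟨fun _ _ => rfl, fun _ _ => rfl⟩ 0)

lemma fderiv_zero_of_pder {ι : Type*} [Fintype ι] [DecidableEq ι] {f : (ι → ℝ) → ℝ} {u : ι → ℝ}
    (h : ∀ b, fderiv ℝ f u (Pi.single b 1) = 0) : fderiv ℝ f u = 0 := by
  apply ContinuousLinearMap.ext
  intro v
  have hv : v = ∑ b : ι, Pi.single b (v b) := (Finset.univ_sum_single v).symm
  rw [hv, map_sum]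
  have hz : ∀ b : ι, fderiv ℝ f u (Pi.single b (v b)) = 0 := by
    intro b
    have hs : Pi.single b (v b) = v b • (Pi.single b (1:ℝ) : ι → ℝ) := by
      rw [← Pi.single_smul', smul_eq_mul, mul_one]
    rw [hs, map_smul, h b, smul_zero]
  simp [hz]

lemma update_mem_Mtil {n : ℕ} {z : Idx n → ℝ} (hz : z ∈ Mtil n) (i : Fin 4) (hi2 : i ≠ 0)
    (hi3 : i ≠ 1) (t : ℝ) : Function.update z (Sum.inl i) t ∈ Mtil n := by
  have h0 : (Sum.inl 0 : Idx n) ≠ Sum.inl i := by simpa using hi2.symm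
  have h1 : (Sum.inl 1 : Idx n) ≠ Sum.inl i := by simpa using hi3.symm
  exact ⟨by rw [Function.update_of_ne h0]; exact hz.1,
    by rw [Function.update_of_ne h1]; exact hz.2⟩

theorem omt_no_hamiltonian (n : ℕ) (hn : 3 ≤ n) :
    -- the only (smooth) vector field X with i(X)dω̃ = 0 on M̃ is X = 0:
    (∀ X : (Idx n → ℝ) → Idx n → ℝ, (∀ a, ContDiff ℝ (⊤ : ℕ∞) (fun z => X z a)) →
      (∀ z ∈ Mtil n, ∀ b c, intThree X (dTwo (omt n)) z b c = 0) →
      ∀ z ∈ Mtil n, X z = 0) ∧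
    -- consequently every Hamiltonian function on (M̃, ω̃) is constant:
    (∀ f : (Idx n → ℝ) → ℝ, ContDiff ℝ (⊤ : ℕ∞) f →
      ∀ Y : (Idx n → ℝ) → Idx n → ℝ, (∀ a, ContDiff ℝ (⊤ : ℕ∞) (fun z => Y z a)) →
        (∀ z ∈ Mtil n, ∀ b, intTwo Y (omt n) z b = - pder b f z) →
        (∀ z ∈ Mtil n, ∀ b c, intThree Y (dTwo (omt n)) z b c = 0) →
        ∀ z ∈ Mtil n, ∀ w ∈ Mtil n, f z = f w) := by
  have k0 : Fin (n - 2) := ⟨0, by omega⟩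
  have main : ∀ X : (Idx n → ℝ) → Idx n → ℝ, (∀ a, ContDiff ℝ (⊤ : ℕ∞) (fun z => X z a)) →
      (∀ z ∈ Mtil n, ∀ b c, intThree X (dTwo (omt n)) z b c = 0) →
      ∀ z ∈ Mtil n, X z = 0 := by
    intro X hX hEq z hz
    have hC : ∀ a, Continuous fun w => X w a := fun a => (hX a).continuous
    -- the x³ component vanishes everywhere on M̃ (by continuity and density)
    have hX2 : ∀ w ∈ Mtil n, X w (Sum.inl 2) = 0 := by
      intro w hw
      have hg : Continuous fun t : ℝ => X (Function.update w (Sum.inl 2) t) (Sum.inl 2) :=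
        (hC _).comp (cont_update w (Sum.inl 2))
      have hzero : ∀ t : ℝ, t ≠ -w (Sum.inl 3) →
          X (Function.update w (Sum.inl 2) t) (Sum.inl 2) = 0 := by
        intro t ht
        set u := Function.update w (Sum.inl 2) t with hu
        have hum : u ∈ Mtil n := update_mem_Mtil hw 2 (by decide) (by decide) t
        have h23 := eqX23 X u (hEq u hum _ _)
        have h4 := eqE4 X u k0 (hEq u hum _ _)
        have hu2 : u (Sum.inl 2) = t := by rw [hu]; exact Function.update_self _ _ _
        have hu3 : u (Sum.inl 3) = w (Sum.inl 3) := by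
          rw [hu]; exact Function.update_of_ne (by simp) _ _
        rw [hu2, hu3] at h4
        have hmul : (w (Sum.inl 3) + t) * X u (Sum.inl 2) = 0 := by
          linear_combination h4 + t * h23
        have hne : w (Sum.inl 3) + t ≠ 0 := fun hcon => ht (by linarith)
        exact (mul_eq_zero.mp hmul).resolve_left hne
      have := dense_aux hg (-w (Sum.inl 3)) hzero (w (Sum.inl 2))
      rwa [Function.update_eq_self] at this
    -- the y-components vanish everywhere on M̃
    have hYr : ∀ w ∈ Mtil n, ∀ k : Fin (n - 2), X w (Sum.inr (Sum.inr k)) = 0 := by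
      intro w hw k
      have hg : Continuous fun t : ℝ =>
          X (Function.update w (Sum.inl 3) t) (Sum.inr (Sum.inr k)) :=
        (hC _).comp (cont_update w (Sum.inl 3))
      have hzero : ∀ t : ℝ, t ≠ 0 →
          X (Function.update w (Sum.inl 3) t) (Sum.inr (Sum.inr k)) = 0 := by
        intro t ht
        set u := Function.update w (Sum.inl 3) t with hu
        have hum : u ∈ Mtil n := update_mem_Mtil hw 3 (by decide) (by decide) t
        have h5 := eqY2 X u k (hEq u hum _ _)
        have hu3 : u (Sum.inl 3) = t := by rw [hu]; exact Function.update_self _ _ _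
        rw [hu3] at h5
        exact (mul_eq_zero.mp h5).resolve_left ht
      have := dense_aux hg 0 hzero (w (Sum.inl 3))
      rwa [Function.update_eq_self] at this
    have hYl : ∀ w ∈ Mtil n, ∀ k : Fin (n - 2), X w (Sum.inr (Sum.inl k)) = 0 := by
      intro w hw k
      have hg : Continuous fun t : ℝ =>
          X (Function.update w (Sum.inl 3) t) (Sum.inr (Sum.inl k)) :=
        (hC _).comp (cont_update w (Sum.inl 3))
      have hzero : ∀ t : ℝ, t ≠ 0 →
          X (Function.update w (Sum.inl 3) t) (Sum.inr (Sum.inl k)) = 0 := by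
        intro t ht
        set u := Function.update w (Sum.inl 3) t with hu
        have hum : u ∈ Mtil n := update_mem_Mtil hw 3 (by decide) (by decide) t
        have h5 := eqY1 X u k (hEq u hum _ _)
        have hu3 : u (Sum.inl 3) = t := by rw [hu]; exact Function.update_self _ _ _
        rw [hu3] at h5
        exact (mul_eq_zero.mp h5).resolve_left ht
      have := dense_aux hg 0 hzero (w (Sum.inl 3))
      rwa [Function.update_eq_self] at this
    funext a
    simp only [Pi.zero_apply]
    rcases a with i | (k | k)
    · fin_cases i
      · exact eqX0 X z (hEq z hz _ _)
      · exact eqX1 X z (hEq z hz _ _)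
      · exact hX2 z hz
      · have h23 := eqX23 X z (hEq z hz _ _)
        rw [hX2 z hz] at h23
        exact h23.symm
    · exact hYl z hz k
    · exact hYr z hz k
  refine ⟨main, ?_⟩
  intro f hf Y hY hHam hLH z hz w hw
  have hY0 : ∀ u ∈ Mtil n, Y u = 0 := fun u hu => main Y hY hLH u hu
  have hpd : ∀ u ∈ Mtil n, fderiv ℝ f u = 0 := by
    intro u hu
    apply fderiv_zero_of_pder
    intro b
    have h1 := hHam u hu b
    rw [intTwo] at h1
    simp only [hY0 u hu, Pi.zero_apply, zero_mul, Finset.sum_const_zero] at h1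
    have h2 : pder b f u = 0 := by linarith
    simpa [pder] using h2
  exact (convex_Mtil n).is_const_of_fderivWithin_eq_zero
    ((hf.differentiable (by simp)).differentiableOn)
    (fun x hx => by rw [fderivWithin_of_isOpen (isOpen_Mtil n) hx]; exact hpd x hx) hz hw
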